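/- arXiv:1405.2214 — 2 statements merged into one kernel-verified Lean document; each statement's English description precedes it below -/
import Mathlib

section
/- A positive linear map Φ on n×n complex matrices is irreducible (i.e. the only orthogonal projections P with Φ(PMP) ⊆ PMP for all matrices M are P = 0 and P = I) if and only if it is ergodic, i.e. for every nonzero positive semidefinite matrix ρ and every t > 0, the matrix exp(tΦ)(ρ) is positive definite. -/
/-!
Write `σ = exp(tΦ) ρ = ∑ₖ tᵏ/k! • Φᵏ ρ`. All terms are positive semidefinite, so `σ` is, and every
term (hence also `Φ σ`) vanishes on `ker σ`. Let `P` be the support projection of `σ`; then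
`P ≤ e • σ` for some `e`, so a positive `M` in the corner `P M P` is dominated by a multiple of `σ`,
and `Φ M ≤ c • Φ σ` vanishes on `ker σ = ker P`: `Φ M` lies in the corner again. Positive matrices
span, so the corner is `Φ`-invariant, and irreducibility leaves only `P = 1` (`P = 0` would force
`ρ = 0`), i.e. `σ` is positive definite.

Conversely, an invariant corner contains every `Φᵏ P`, and, being closed, also `exp(Φ) P`. If this
is positive definite it is invertible, and `exp(Φ) P * P = exp(Φ) P` gives `P = 1`.
-/

open Matrix
open scoped ComplexOrder

namespace Matrix

open scoped MatrixOrder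

section Order

variable {ι 𝕜 : Type*} [Fintype ι] [RCLike 𝕜]

theorem isClosed_setOf_posSemidef : IsClosed {A : Matrix ι ι 𝕜 | A.PosSemidef} := by
  simp only [posSemidef_iff_dotProduct_mulVec, Set.ofPred_and, Set.ofPred_forall]
  exact (isClosed_eq continuous_id.matrix_conjTranspose continuous_id).inter <|
    isClosed_iInter fun x => isClosed_le continuous_const <|
      continuous_const.dotProduct (continuous_id.matrix_mulVec continuous_const)

instance : OrderClosedTopology (Matrix ι ι 𝕜) :=
  ⟨isClosed_le_of_isClosed_nonneg <| by
    simpa only [nonneg_iff_posSemidef] using isClosed_setOf_posSemidef⟩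

theorem mulVec_eq_zero_of_le {A B : Matrix ι ι 𝕜} (hA : 0 ≤ A) (hAB : A ≤ B) {x : ι → 𝕜}
    (hx : B *ᵥ x = 0) : A *ᵥ x = 0 := by
  rw [nonneg_iff_posSemidef] at hA
  rw [← hA.dotProduct_mulVec_zero_iff]
  refine le_antisymm ?_ (hA.dotProduct_mulVec_nonneg x)
  simpa [sub_mulVec, hx] using (le_iff.mp hAB).dotProduct_mulVec_nonneg x

theorem mulVec_eq_zero_of_hasSum {f : ℕ → Matrix ι ι 𝕜} {A : Matrix ι ι 𝕜} (hf : HasSum f A)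
    {x : ι → 𝕜} (hx : ∀ k, f k *ᵥ x = 0) : A *ᵥ x = 0 := by
  have h : HasSum (fun k => f k *ᵥ x) (A *ᵥ x) :=
    hf.map (mulVec.addMonoidHomLeft x) (continuous_id.matrix_mulVec continuous_const)
  simp only [hx] at h
  exact h.unique hasSum_zero

theorem mul_mul_eq_self_of_ker {P H : Matrix ι ι 𝕜} (hP : IsStarProjection P)
    (hH : H.IsHermitian) (hker : ∀ x, P *ᵥ x = 0 → H *ᵥ x = 0) : P * H * P = H := by
  have hHP : H * P = H := by
    refine ext_iff_mulVec.mpr fun v => ?_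
    rw [← mulVec_mulVec, ← sub_eq_zero, ← mulVec_sub]
    refine hker _ ?_
    rw [mulVec_sub, mulVec_mulVec, hP.isIdempotentElem.eq, sub_self]
  have hPH : P * H = H := by
    simpa [hP.isSelfAdjoint.star_eq, hH.isSelfAdjoint.star_eq] using congrArg star hHP
  rw [hPH, hHP]

theorem posSemidef_of_isStarProjection {P : Matrix ι ι 𝕜} (hP : IsStarProjection P) :
    P.PosSemidef :=
  nonneg_iff_posSemidef.mp hP.nonneg

variable [DecidableEq ι]

theorem IsHermitian.exists_le_smul_one {A : Matrix ι ι 𝕜} (hA : A.IsHermitian) :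
    ∃ r : ℝ, 0 ≤ r ∧ A ≤ r • 1 := by
  obtain ⟨r, hr⟩ := (finite_real_spectrum (A := A)).bddAbove
  refine ⟨max r 0, le_max_right _ _, ?_⟩
  rw [← Algebra.algebraMap_eq_smul_one]
  exact le_algebraMap_of_spectrum_le (fun x hx => (hr hx).trans (le_max_left _ _)) hA.isSelfAdjoint

theorem PosSemidef.posDef_of_mulVec_eq_zero {A : Matrix ι ι 𝕜} (hA : A.PosSemidef)
    (h : ∀ x, A *ᵥ x = 0 → x = 0) : A.PosDef := by
  rw [hA.posDef_iff_isUnit, ← mulVec_injective_iff_isUnit]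
  exact (injective_iff_map_eq_zero A.mulVecLin).2 h

theorem PosSemidef.exists_support_projection {σ : Matrix ι ι 𝕜} (hσ : σ.PosSemidef) :
    ∃ P : Matrix ι ι 𝕜, IsStarProjection P ∧ σ * P = σ ∧ ∃ e : ℝ, P ≤ e • σ := by
  set f : ℝ → ℝ := fun x => if x = 0 then 0 else 1
  have hcont (g : ℝ → ℝ) : ContinuousOn g (spectrum ℝ σ) := finite_real_spectrum.continuousOn g
  obtain ⟨e, he⟩ := (finite_real_spectrum (A := σ)).image (·⁻¹) |>.bddAbove
  refine ⟨cfc f σ, ⟨?_, cfc_predicate f σ⟩, ?_, e, ?_⟩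
  · rw [IsIdempotentElem, ← cfc_mul f f σ (hcont f) (hcont f)]
    congr! 2 with x
    by_cases hx : x = 0 <;> simp [f, hx]
  · have hid : (fun x => x * f x) = fun x => x := by
      ext x
      by_cases hx : x = 0 <;> simp [f, hx]
    calc σ * cfc f σ = cfc (fun x => x * f x) σ := by
          rw [cfc_mul (fun x => x) f σ (hcont _) (hcont f), cfc_id' ℝ σ]
      _ = σ := by rw [hid, cfc_id' ℝ σ]
  · rw [← cfc_const_mul_id e σ hσ.isHermitian.isSelfAdjoint]
    refine cfc_mono (fun x hx => ?_) (hcont f) (hcont _)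
    have hx0 : 0 ≤ x := spectrum_nonneg_of_nonneg (nonneg_iff_posSemidef.mpr hσ) hx
    rcases hx0.eq_or_lt with rfl | hpos
    · simp [f]
    · simpa [f, hpos.ne', ← inv_le_iff_one_le_mul₀ hpos] using he ⟨x, hx, rfl⟩

end Order

section PositiveMap

variable {ι : Type*} {Φ : Matrix ι ι ℂ →ₗ[ℂ] Matrix ι ι ℂ}

theorem map_le_map_of_posSemidef (hΦ : ∀ ρ, ρ.PosSemidef → (Φ ρ).PosSemidef)
    {A B : Matrix ι ι ℂ} (h : A ≤ B) : Φ A ≤ Φ B := by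
  rw [le_iff, ← map_sub]
  exact hΦ _ (le_iff.mp h)

theorem pow_apply_posSemidef (hΦ : ∀ ρ, ρ.PosSemidef → (Φ ρ).PosSemidef)
    {ρ : Matrix ι ι ℂ} (hρ : ρ.PosSemidef) (k : ℕ) : ((Φ ^ k) ρ).PosSemidef := by
  induction k with
  | zero => simpa using hρ
  | succ k ih => simpa only [pow_succ', Module.End.mul_apply] using hΦ _ ih

variable [Fintype ι] {ρ σ : Matrix ι ι ℂ} {c : ℕ → ℝ}

theorem posSemidef_of_hasSum (hΦ : ∀ ρ, ρ.PosSemidef → (Φ ρ).PosSemidef) (hρ : ρ.PosSemidef)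
    (hc : ∀ k, 0 ≤ c k) (hσ : HasSum (fun k => c k • (Φ ^ k) ρ) σ) : σ.PosSemidef :=
  nonneg_iff_posSemidef.mp <| hσ.nonneg fun k =>
    smul_nonneg (hc k) (nonneg_iff_posSemidef.mpr (pow_apply_posSemidef hΦ hρ k))

theorem pow_apply_mulVec_eq_zero_of_hasSum (hΦ : ∀ ρ, ρ.PosSemidef → (Φ ρ).PosSemidef)
    (hρ : ρ.PosSemidef) (hc : ∀ k, 0 < c k) (hσ : HasSum (fun k => c k • (Φ ^ k) ρ) σ)
    {x : ι → ℂ} (hx : σ *ᵥ x = 0) (k : ℕ) : (Φ ^ k) ρ *ᵥ x = 0 := by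
  have hterm (j : ℕ) : 0 ≤ c j • (Φ ^ j) ρ :=
    smul_nonneg (hc j).le (nonneg_iff_posSemidef.mpr (pow_apply_posSemidef hΦ hρ j))
  have := mulVec_eq_zero_of_le (hterm k) (le_hasSum hσ k fun j _ => hterm j) hx
  rwa [smul_mulVec, smul_eq_zero, or_iff_right (hc k).ne'] at this

theorem map_mulVec_eq_zero_of_hasSum (hΦ : ∀ ρ, ρ.PosSemidef → (Φ ρ).PosSemidef)
    (hρ : ρ.PosSemidef) (hc : ∀ k, 0 < c k) (hσ : HasSum (fun k => c k • (Φ ^ k) ρ) σ)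
    {x : ι → ℂ} (hx : σ *ᵥ x = 0) : Φ σ *ᵥ x = 0 := by
  have hΦσ : HasSum (fun k => c k • (Φ ^ (k + 1)) ρ) (Φ σ) := by
    simpa [pow_succ', Function.comp_def] using hσ.map Φ Φ.continuous_of_finiteDimensional
  refine mulVec_eq_zero_of_hasSum hΦσ fun k => ?_
  rw [smul_mulVec, pow_apply_mulVec_eq_zero_of_hasSum hΦ hρ hc hσ hx, smul_zero]

variable [DecidableEq ι] {P : Matrix ι ι ℂ} {e : ℝ}

theorem mul_map_mul_eq_of_nonneg (hΦ : ∀ ρ, ρ.PosSemidef → (Φ ρ).PosSemidef)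
    (hσΦ : ∀ x, σ *ᵥ x = 0 → Φ σ *ᵥ x = 0) (hP : IsStarProjection P) (hσP : σ * P = σ)
    (hPσ : P ≤ e • σ) {M : Matrix ι ι ℂ} (hM : 0 ≤ M) :
    P * Φ (P * M * P) * P = Φ (P * M * P) := by
  obtain ⟨r, hr, hMr⟩ := (nonneg_iff_posSemidef.mp hM).isHermitian.exists_le_smul_one
  have hPMP : P * M * P ≤ (r * e) • σ := calc
    P * M * P ≤ P * (r • 1) * P := hP.isSelfAdjoint.conjugate_le_conjugate hMr
    _ = r • P := by rw [mul_smul_comm, mul_one, smul_mul_assoc, hP.isIdempotentElem.eq]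
    _ ≤ r • e • σ := smul_le_smul_of_nonneg_left hPσ hr
    _ = (r * e) • σ := smul_smul r e σ
  have hΦPMP : 0 ≤ Φ (P * M * P) := nonneg_iff_posSemidef.mpr <|
    hΦ _ (nonneg_iff_posSemidef.mp (hP.isSelfAdjoint.conjugate_nonneg hM))
  refine mul_mul_eq_self_of_ker hP (nonneg_iff_posSemidef.mp hΦPMP).isHermitian fun x hx => ?_
  have hσx : σ *ᵥ x = 0 := by rw [← hσP, ← mulVec_mulVec, hx, mulVec_zero]
  refine mulVec_eq_zero_of_le hΦPMP (map_le_map_of_posSemidef hΦ hPMP) ?_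
  rw [Φ.map_smul_of_tower, smul_mulVec, hσΦ x hσx, smul_zero]

theorem map_mul_mul_eq_of_support (hΦ : ∀ ρ, ρ.PosSemidef → (Φ ρ).PosSemidef)
    (hσΦ : ∀ x, σ *ᵥ x = 0 → Φ σ *ᵥ x = 0) (hP : IsStarProjection P) (hσP : σ * P = σ)
    (hPσ : P ≤ e • σ) (ρ : Matrix ι ι ℂ) : Φ (P * ρ * P) = P * Φ (P * ρ * P) * P := by
  have hρ : ρ ∈ Submodule.span ℂ {A | 0 ≤ A} :=
    (CStarAlgebra.span_nonneg (A := Matrix ι ι ℂ)) ▸ Submodule.mem_top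
  induction hρ using Submodule.span_induction with
  | mem A hA => exact (mul_map_mul_eq_of_nonneg hΦ hσΦ hP hσP hPσ hA).symm
  | zero => simp
  | add A B _ _ hA hB => simp only [mul_add, add_mul, map_add]; rw [← hA, ← hB]
  | smul a A _ hA => simp only [mul_smul_comm, smul_mul_assoc, map_smul]; rw [← hA]

def IsIrreducibleMap (Φ : Matrix ι ι ℂ →ₗ[ℂ] Matrix ι ι ℂ) : Prop :=
  ∀ P : Matrix ι ι ℂ, P.IsHermitian → P * P = P →
    (∀ ρ, Φ (P * ρ * P) = P * Φ (P * ρ * P) * P) → P = 0 ∨ P = 1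

theorem posDef_of_hasSum_of_isIrreducibleMap (hΦ : ∀ ρ, ρ.PosSemidef → (Φ ρ).PosSemidef)
    (hirr : IsIrreducibleMap Φ) (hρ : ρ.PosSemidef) (hρ0 : ρ ≠ 0) (hc : ∀ k, 0 < c k)
    (hσ : HasSum (fun k => c k • (Φ ^ k) ρ) σ) : σ.PosDef := by
  have hσpos := posSemidef_of_hasSum hΦ hρ (fun k => (hc k).le) hσ
  obtain ⟨P, hP, hσP, e, hPσ⟩ := hσpos.exists_support_projection
  have hinv := map_mul_mul_eq_of_support hΦ (fun x => map_mulVec_eq_zero_of_hasSum hΦ hρ hc hσ)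
    hP hσP hPσ
  rcases hirr P hP.isSelfAdjoint hP.isIdempotentElem hinv with rfl | rfl
  · refine absurd (ext_iff_mulVec.mpr fun x => ?_) hρ0
    simpa using pow_apply_mulVec_eq_zero_of_hasSum hΦ hρ hc hσ
      (by rw [← hσP, mul_zero, zero_mulVec]) 0
  · refine hσpos.posDef_of_mulVec_eq_zero fun x hx => ?_
    simpa using mulVec_eq_zero_of_le hP.nonneg hPσ (by rw [smul_mulVec, hx, smul_zero])

theorem eq_one_of_posDef_of_hasSum (hP : P * P = P)
    (hinv : ∀ ρ, Φ (P * ρ * P) = P * Φ (P * ρ * P) * P)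
    (hσ : HasSum (fun k => c k • (Φ ^ k) P) σ) (hσpos : σ.PosDef) : P = 1 := by
  let corner : Submodule ℂ (Matrix ι ι ℂ) :=
    LinearMap.eqLocus (LinearMap.mulLeftRight ℂ (P, P)) LinearMap.id
  have hclosed : IsClosed (corner : Set (Matrix ι ι ℂ)) :=
    isClosed_eq (LinearMap.continuous_of_finiteDimensional _) continuous_id
  have hpow (k : ℕ) : (Φ ^ k) P ∈ corner := by
    induction k with
    | zero => simp [corner, hP]
    | succ k ih =>
      simp only [corner, LinearMap.mem_eqLocus, LinearMap.mulLeftRight_apply, LinearMap.id_apply,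
        pow_succ', Module.End.mul_apply] at ih ⊢
      rw [← ih, ← hinv]
  have hσc : P * σ * P = σ := by
    have hσmem : σ ∈ corner :=
      hσ.tsum_eq ▸ tsum_mem hclosed fun k => corner.smul_of_tower_mem (c k) (hpow k)
    simpa [corner] using hσmem
  refine hσpos.isUnit.mul_eq_left.mp ?_
  rw [← hσc, mul_assoc, hP]

end PositiveMap

end Matrix

open NormedSpace Nat in
theorem hasSum_exp_smul_apply {E : Type*} [NormedAddCommGroup E] [NormedSpace ℂ E]
    [CompleteSpace E] (A : E →L[ℂ] E) (t : ℝ) (x : E) :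
    HasSum (fun k : ℕ => (t ^ k / k ! : ℝ) • (A ^ k) x) (exp (t • A) x) := by
  have h := (exp_series_hasSum_exp' (𝕂 := ℝ) (t • A)).map (ContinuousLinearMap.apply ℂ E x)
    (ContinuousLinearMap.apply ℂ E x).continuous
  simpa [Function.comp_def, smul_pow, div_eq_inv_mul, mul_smul] using h

attribute [local instance] Matrix.linftyOpNormedAddCommGroup Matrix.linftyOpNormedSpace

open Nat in
theorem Matrix.hasSum_exp_smul_toContinuousLinearMap_apply {ι : Type*} [Fintype ι]
    (Φ : Matrix ι ι ℂ →ₗ[ℂ] Matrix ι ι ℂ) (t : ℝ) (ρ : Matrix ι ι ℂ) :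
    HasSum (fun k : ℕ => (t ^ k / k ! : ℝ) • (Φ ^ k) ρ)
      ((@NormedSpace.exp _ _ _ (@NonUnitalSeminormedRing.toIsTopologicalRing _
        ContinuousLinearMap.toNormedRing.toNonUnitalNormedRing.toNonUnitalSeminormedRing)
        (t • LinearMap.toContinuousLinearMap Φ)) ρ) := by
  have hpow (k : ℕ) : (LinearMap.toContinuousLinearMap Φ ^ k) ρ = (Φ ^ k) ρ := by
    rw [← ContinuousLinearMap.coe_coe, ContinuousLinearMap.toLinearMap_pow,
      LinearMap.coe_toContinuousLinearMap]
  simp only [← hpow]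
  exact hasSum_exp_smul_apply _ t ρ

/-- A positive linear map on n×n complex matrices is irreducible iff it is
ergodic: `exp(tΦ)(ρ)` is positive definite for every nonzero positive
semidefinite `ρ` and every `t > 0`. -/
theorem stmt2 {n : ℕ}
    (Φ : Matrix (Fin n) (Fin n) ℂ →ₗ[ℂ] Matrix (Fin n) (Fin n) ℂ)
    (hpos : ∀ ρ, ρ.PosSemidef → (Φ ρ).PosSemidef) :
    (∀ P : Matrix (Fin n) (Fin n) ℂ, P.IsHermitian → P * P = P →
        (∀ ρ, Φ (P * ρ * P) = P * Φ (P * ρ * P) * P) → P = 0 ∨ P = 1) ↔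
    (∀ ρ : Matrix (Fin n) (Fin n) ℂ, ρ.PosSemidef → ρ ≠ 0 → ∀ t : ℝ, 0 < t →
        ((@NormedSpace.exp _ _ _ (@NonUnitalSeminormedRing.toIsTopologicalRing _ ContinuousLinearMap.toNormedRing.toNonUnitalNormedRing.toNonUnitalSeminormedRing) (t • LinearMap.toContinuousLinearMap Φ)) ρ).PosDef) := by
  refine ⟨fun hirr ρ hρ hρ0 t ht => ?_, fun herg P hPH hPP hinv => ?_⟩
  · exact posDef_of_hasSum_of_isIrreducibleMap hpos hirr hρ hρ0 (fun k => by positivity)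
      (hasSum_exp_smul_toContinuousLinearMap_apply Φ t ρ)
  · by_cases hP0 : P = 0
    · exact .inl hP0
    have hPpos := posSemidef_of_isStarProjection ⟨hPP, hPH.isSelfAdjoint⟩
    exact .inr <| eq_one_of_posDef_of_hasSum hPP hinv
      (hasSum_exp_smul_toContinuousLinearMap_apply Φ 1 P) (herg P hPpos hP0 1 one_pos)
end

section
/- Let 𝔐 be a translation-invariant open quantum random walk on an infinite countable abelian group V with identical internal spaces 𝔥_i = 𝔥 and transition operators L_{i,j} = L_{j−i}. If 𝔐 is irreducible, then 𝔐 has no invariant state. -/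
/-!
Translating an invariant state by `u ∈ V` gives an invariant state of the same total trace, so it
suffices that an irreducible walk has at most one invariant state: every invariant state is then
translation invariant, its blocks have constant trace, and a constant summable family on an
infinite group vanishes.

For uniqueness of invariant states `ρ`, `σ`, let `a i = (ρ i - σ i)⁺`. Since
`𝔐(a) ≥ 𝔐(ρ - σ) = ρ - σ`, we get `tr (a i) ≤ tr (𝔐(a) i)` for every `i`; as `𝔐` preserves the
total trace, these are equalities, which forces `𝔐(a) i` to vanish on `ker (a i)`. Hence the
adjoint steps `L s†` carry the kernels of `a` into each other. A path from a vector in the range of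
some `a i₁` to one in the range of some `(ρ i₂ - σ i₂)⁻ ⊆ ker (a i₂)` then has zero amplitude, so by
irreducibility `a = 0` or `(ρ - σ)⁻ = 0`, and equality of the total traces gives `ρ = σ`.
-/

open Matrix
open scoped ComplexOrder MatrixOrder

lemma eq_of_le_of_hasSum {ι : Type*} {f g : ι → ℝ} {t : ℝ} (hfg : f ≤ g) (hf : HasSum f t)
    (hg : HasSum g t) : f = g := by
  have h := (hasSum_zero_iff_of_nonneg fun i => sub_nonneg.mpr (hfg i)).mp
    (by simpa using hg.sub hf)
  exact funext fun i => (sub_eq_zero.mp (congrFun h i)).symm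

namespace Matrix

variable {n : Type*} [Fintype n]

lemma star_dotProduct_mulVec {m R : Type*} [Fintype m] [CommSemiring R] [StarRing R]
    (B : Matrix m n R) (y : m → R) (z : n → R) : star y ⬝ᵥ (B *ᵥ z) = star (Bᴴ *ᵥ y) ⬝ᵥ z := by
  rw [star_mulVec, conjTranspose_conjTranspose, dotProduct_mulVec]

lemma exists_mulVec_ne_zero {m R : Type*} [Semiring R] {A : Matrix m n R} (h : A ≠ 0) :
    ∃ u, A *ᵥ u ≠ 0 := by
  by_contra! hA
  exact h (ext_iff_mulVec.mpr fun u => by simp [hA u])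

lemma PosSemidef.re_trace_nonneg {A : Matrix n n ℂ} (hA : A.PosSemidef) : 0 ≤ A.trace.re :=
  (Complex.nonneg_iff.mp hA.trace_nonneg).1

lemma PosSemidef.eq_zero_of_re_trace_eq_zero {A : Matrix n n ℂ} (hA : A.PosSemidef)
    (h : A.trace.re = 0) : A = 0 :=
  hA.trace_eq_zero_iff.mp (Complex.ext h (Complex.nonneg_iff.mp hA.trace_nonneg).2.symm)

lemma eq_of_le_of_hasSum_re_trace {ι : Type*} {ρ σ : ι → Matrix n n ℂ}
    (hle : ∀ i, ρ i ≤ σ i) {t : ℝ} (hρ : HasSum (fun i => (ρ i).trace.re) t)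
    (hσ : HasSum (fun i => (σ i).trace.re) t) : ρ = σ := by
  have hle_tr : ∀ i, (ρ i).trace.re ≤ (σ i).trace.re := fun i => by
    have := (hle i).re_trace_nonneg
    rw [trace_sub, Complex.sub_re] at this
    linarith
  have htr := eq_of_le_of_hasSum hle_tr hρ hσ
  funext i
  refine (sub_eq_zero.mp ((hle i).eq_zero_of_re_trace_eq_zero ?_)).symm
  rw [trace_sub, Complex.sub_re, congrFun htr i, sub_self]

variable [DecidableEq n]

lemma PosSemidef.re_trace_mul_nonneg {A B : Matrix n n ℂ} (hA : A.PosSemidef)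
    (hB : B.PosSemidef) : 0 ≤ (A * B).trace.re := by
  obtain ⟨C, rfl⟩ := CStarAlgebra.nonneg_iff_eq_star_mul_self.mp hA.nonneg
  rw [Matrix.mul_assoc, trace_mul_comm, Matrix.mul_assoc, star_eq_conjTranspose]
  simpa only [Matrix.mul_assoc] using (hB.mul_mul_conjTranspose_same C).re_trace_nonneg

lemma PosSemidef.mul_eq_zero_of_conjTranspose_mul_mul_eq_zero {M B : Matrix n n ℂ}
    (hM : M.PosSemidef) (h : Bᴴ * M * B = 0) : M * B = 0 := by
  obtain ⟨C, rfl⟩ := CStarAlgebra.nonneg_iff_eq_star_mul_self.mp hM.nonneg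
  rw [star_eq_conjTranspose] at h ⊢
  rw [conjTranspose_mul_self_mul_eq_zero, ← conjTranspose_mul_self_eq_zero, conjTranspose_mul]
  simpa only [Matrix.mul_assoc] using h

lemma continuousOn_spectrum (f : ℝ → ℝ) (A : Matrix n n ℂ) : ContinuousOn f (spectrum ℝ A) :=
  A.finite_real_spectrum.continuousOn f

noncomputable def posProj (A : Matrix n n ℂ) : Matrix n n ℂ :=
  cfc (fun x : ℝ => if 0 < x then 1 else 0) A

lemma posPart_eq_cfc (A : Matrix n n ℂ) : A⁺ = cfc (fun x : ℝ => max x 0) A := by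
  rw [CFC.posPart_def, cfcₙ_eq_cfc]
  rfl

lemma isHermitian_posProj (A : Matrix n n ℂ) : A.posProj.IsHermitian :=
  cfc_predicate _ A

lemma posProj_mul_self (A : Matrix n n ℂ) : A.posProj * A.posProj = A.posProj := by
  rw [posProj, ← cfc_mul _ _ A (continuousOn_spectrum _ A) (continuousOn_spectrum _ A)]
  congr 1
  funext x
  split_ifs <;> simp

lemma posProj_mul_mul_posProj {A : Matrix n n ℂ} (hA : A.IsHermitian) :
    A.posProj * A * A.posProj = A⁺ := by
  have hid : cfc (fun x : ℝ => x) A = A := cfc_id' ℝ A hA.isSelfAdjoint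
  rw [posProj, posPart_eq_cfc]
  nth_rewrite 2 [← hid]
  rw [← cfc_mul _ _ A (continuousOn_spectrum _ A) (continuousOn_spectrum _ A),
    ← cfc_mul _ _ A (continuousOn_spectrum _ A) (continuousOn_spectrum _ A)]
  congr 1
  funext x
  split_ifs with h
  · simp [h.le]
  · simp [le_of_not_gt h]

lemma posProj_mulVec_eq_zero {A : Matrix n n ℂ} {y : n → ℂ} (hy : A⁺ *ᵥ y = 0) :
    A.posProj *ᵥ y = 0 := by
  have : A.posProj = cfc (fun x : ℝ => if 0 < x then x⁻¹ else 0) A * A⁺ := by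
    rw [posProj, posPart_eq_cfc,
      ← cfc_mul _ _ A (continuousOn_spectrum _ A) (continuousOn_spectrum _ A)]
    congr 1
    funext x
    split_ifs with h
    · simp [h.le, h.ne']
    · simp
  rw [this, ← mulVec_mulVec, hy, mulVec_zero]

lemma conjTranspose_one_sub_posProj (A : Matrix n n ℂ) : (1 - A.posProj)ᴴ = 1 - A.posProj :=
  (isHermitian_one.sub (isHermitian_posProj A)).eq

/-- With `P = η.posProj` and `Q = 1 - P`: `tr η⁺ = tr (P η P) ≤ tr (P M P) = tr M - tr (Q M Q)`. -/
lemma re_trace_posPart_add_le {η M : Matrix n n ℂ} (hM : M.PosSemidef) (hηM : η ≤ M) :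
    (η⁺).trace.re + ((1 - η.posProj) * M * (1 - η.posProj)).trace.re ≤ M.trace.re := by
  have hη : η.IsHermitian := by simpa using hM.isHermitian.sub hηM.isHermitian
  set P := η.posProj
  have hPP : P * P = P := posProj_mul_self η
  have hPh : Pᴴ = P := (isHermitian_posProj η).eq
  have hPη : 0 ≤ (P * (M - η) * P).trace.re := by
    simpa only [hPh] using (hηM.mul_mul_conjTranspose_same P).re_trace_nonneg
  have hPMP : (P * M * P).trace = (M * P).trace := by
    rw [trace_mul_cycle, hPP, trace_mul_comm]
  have hQMQ : ((1 - P) * M * (1 - P)).trace = M.trace - (M * P).trace := by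
    simp only [Matrix.sub_mul, Matrix.mul_sub, Matrix.one_mul, Matrix.mul_one, trace_sub, hPMP,
      trace_mul_comm P M]
    ring
  rw [← posProj_mul_mul_posProj hη, hQMQ, ← hPMP]
  simp only [Matrix.mul_sub, Matrix.sub_mul, trace_sub, Complex.sub_re] at hPη ⊢
  linarith

lemma re_trace_posPart_le {η M : Matrix n n ℂ} (hM : M.PosSemidef) (hηM : η ≤ M) :
    (η⁺).trace.re ≤ M.trace.re := by
  have hQMQ := (hM.mul_mul_conjTranspose_same (1 - η.posProj)).re_trace_nonneg
  rw [conjTranspose_one_sub_posProj] at hQMQ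
  linarith [re_trace_posPart_add_le hM hηM]

lemma mulVec_eq_zero_of_re_trace_le_posPart {η M : Matrix n n ℂ} (hM : M.PosSemidef)
    (hηM : η ≤ M) (htr : M.trace.re ≤ (η⁺).trace.re) {y : n → ℂ} (hy : η⁺ *ᵥ y = 0) :
    M *ᵥ y = 0 := by
  set Q := 1 - η.posProj
  have hQMQ : (Q * M * Q).PosSemidef := by
    simpa only [Q, conjTranspose_one_sub_posProj] using hM.mul_mul_conjTranspose_same Q
  have hMQ : M * Q = 0 := by
    refine hM.mul_eq_zero_of_conjTranspose_mul_mul_eq_zero ?_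
    rw [conjTranspose_one_sub_posProj]
    exact hQMQ.eq_zero_of_re_trace_eq_zero
      (le_antisymm (by linarith [re_trace_posPart_add_le hM hηM]) hQMQ.re_trace_nonneg)
  have hQy : Q *ᵥ y = y := by
    simp [Q, sub_mulVec, posProj_mulVec_eq_zero hy]
  rw [← hQy, mulVec_mulVec, hMQ, zero_mulVec]

end Matrix

section OpenQuantumRandomWalk

variable {V n : Type*} [AddCommGroup V] [Fintype n]

/-- Block `i` of `𝔐 (∑ j, ρ j ⊗ |j⟩⟨j|)`: `𝔐` maps block-diagonal states to block-diagonal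
states. -/
def oqrwMap (S : Finset V) (L : V → Matrix n n ℂ) (ρ : V → Matrix n n ℂ) (i : V) :
    Matrix n n ℂ :=
  ∑ s ∈ S, L s * ρ (i + s) * (L s)ᴴ

variable {S : Finset V} {L : V → Matrix n n ℂ}

lemma oqrwMap_sub (ρ σ : V → Matrix n n ℂ) (i : V) :
    oqrwMap S L (ρ - σ) i = oqrwMap S L ρ i - oqrwMap S L σ i := by
  simp only [oqrwMap, Pi.sub_apply, Matrix.mul_sub, Matrix.sub_mul, Finset.sum_sub_distrib]

lemma oqrwMap_comp_add_right (ρ : V → Matrix n n ℂ) (u : V) :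
    oqrwMap S L (fun i => ρ (i + u)) = fun i => oqrwMap S L ρ (i + u) := by
  funext i
  simp only [oqrwMap, add_right_comm]

lemma posSemidef_oqrwMap {ρ : V → Matrix n n ℂ} (hρ : ∀ i, (ρ i).PosSemidef) (i : V) :
    (oqrwMap S L ρ i).PosSemidef :=
  posSemidef_sum S fun s _ => (hρ (i + s)).mul_mul_conjTranspose_same (L s)

lemma mulVec_conjTranspose_mulVec_eq_zero_of_oqrwMap {a : V → Matrix n n ℂ}
    (ha : ∀ i, (a i).PosSemidef) {i s : V} (hs : s ∈ S) {y : n → ℂ}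
    (hy : oqrwMap S L a i *ᵥ y = 0) : a (i + s) *ᵥ ((L s)ᴴ *ᵥ y) = 0 := by
  have hquad : ∀ t, star y ⬝ᵥ ((L t * a (i + t) * (L t)ᴴ) *ᵥ y)
      = star ((L t)ᴴ *ᵥ y) ⬝ᵥ (a (i + t) *ᵥ ((L t)ᴴ *ᵥ y)) := fun t => by
    rw [← mulVec_mulVec, ← mulVec_mulVec, star_dotProduct_mulVec]
  have hzero : ∑ t ∈ S, star ((L t)ᴴ *ᵥ y) ⬝ᵥ (a (i + t) *ᵥ ((L t)ᴴ *ᵥ y)) = 0 := by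
    simp_rw [← hquad, ← dotProduct_sum, ← sum_mulVec]
    rw [← oqrwMap, hy, dotProduct_zero]
  rw [← (ha (i + s)).dotProduct_mulVec_zero_iff]
  exact (Finset.sum_eq_zero_iff_of_nonneg fun t _ => (ha (i + t)).dotProduct_mulVec_nonneg _).mp
    hzero s hs

variable (S L) in
def IsKerInvariant (a : V → Matrix n n ℂ) : Prop :=
  ∀ i, ∀ s ∈ S, ∀ y, a i *ᵥ y = 0 → a (i + s) *ᵥ ((L s)ᴴ *ᵥ y) = 0

variable [DecidableEq n]

lemma hasSum_re_trace_oqrwMap (hstoch : ∑ s ∈ S, (L s)ᴴ * L s = 1) {ρ : V → Matrix n n ℂ}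
    (hρ : ∀ i, (ρ i).PosSemidef) {t : ℝ} (ht : HasSum (fun i => (ρ i).trace.re) t) :
    HasSum (fun i => (oqrwMap S L ρ i).trace.re) t := by
  set g : V → V → ℝ := fun s j => ((L s)ᴴ * L s * ρ j).trace.re
  have hg : ∀ s ∈ S, Summable (g s) := by
    intro s hs
    have hLs : (L s)ᴴ * L s ≤ 1 := hstoch ▸ Finset.single_le_sum
      (f := fun t => (L t)ᴴ * L t) (fun t _ => (posSemidef_conjTranspose_mul_self _).nonneg) hs
    refine ht.summable.of_nonneg_of_le
      (fun j => (posSemidef_conjTranspose_mul_self _).re_trace_mul_nonneg (hρ j)) fun j => ?_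
    have := PosSemidef.re_trace_mul_nonneg hLs (hρ j)
    rw [Matrix.sub_mul, Matrix.one_mul, trace_sub, Complex.sub_re] at this
    linarith
  have hsum : ∑ s ∈ S, ∑' j, g s j = t := by
    refine (hasSum_sum fun s hs => (hg s hs).hasSum).unique ?_
    convert ht using 2 with j
    rw [← Complex.re_sum, ← trace_sum, ← Finset.sum_mul, hstoch, Matrix.one_mul]
  rw [← hsum]
  convert hasSum_sum fun s hs => (Equiv.addRight s).hasSum_iff.mpr (hg s hs).hasSum using 2 with i
  rw [oqrwMap, trace_sum, Complex.re_sum]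
  exact Finset.sum_congr rfl fun s _ => by rw [trace_mul_cycle]; rfl

lemma IsKerInvariant.mulVec_conjTranspose_list_prod_mulVec_eq_zero {a : V → Matrix n n ℂ}
    (ha : IsKerInvariant S L a) {l : List V} (hl : ∀ s ∈ l, s ∈ S) {i : V} {y : n → ℂ}
    (hy : a i *ᵥ y = 0) :
    a (i + l.sum) *ᵥ (((l.map L).prod)ᴴ *ᵥ y) = 0 := by
  induction l generalizing i y with
  | nil => simpa using hy
  | cons s l ih =>
    have hs := hl s List.mem_cons_self
    rw [List.map_cons, List.prod_cons, conjTranspose_mul, ← mulVec_mulVec, List.sum_cons,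
      ← add_assoc]
    exact ih (fun t ht => hl t (List.mem_cons_of_mem s ht)) (ha i s hs y hy)

variable (S L) in
/-- The path characterisation of irreducibility of `𝔐`. -/
def IsPathIrreducible : Prop :=
  ∀ v : V, ∀ x y : n → ℂ, x ≠ 0 → y ≠ 0 →
    ∃ l : List V, (∀ s ∈ l, s ∈ S) ∧ l.sum = v ∧ star y ⬝ᵥ (l.map L).prod *ᵥ x ≠ 0

lemma IsPathIrreducible.eq_zero_or_eq_zero (hirr : IsPathIrreducible S L)
    {a b : V → Matrix n n ℂ} (ha : ∀ i, (a i).IsHermitian)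
    (hker : IsKerInvariant S L a) (hab : ∀ i, a i * b i = 0) :
    (∀ i, a i = 0) ∨ (∀ i, b i = 0) := by
  by_contra! h
  obtain ⟨⟨i₁, ha₁⟩, ⟨i₂, hb₂⟩⟩ := h
  obtain ⟨u, hu⟩ := exists_mulVec_ne_zero ha₁
  obtain ⟨w, hw⟩ := exists_mulVec_ne_zero hb₂
  have hy : a i₂ *ᵥ (b i₂ *ᵥ w) = 0 := by rw [mulVec_mulVec, hab, zero_mulVec]
  obtain ⟨l, hl, hsum, hne⟩ := hirr (i₁ - i₂) _ _ hu hw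
  have hz := hker.mulVec_conjTranspose_list_prod_mulVec_eq_zero hl hy
  rw [hsum, add_sub_cancel] at hz
  apply hne
  rw [mulVec_mulVec, star_dotProduct_mulVec, conjTranspose_mul, (ha i₁).eq, ← mulVec_mulVec, hz,
    star_zero, zero_dotProduct]

lemma isKerInvariant_posPart_sub (hstoch : ∑ s ∈ S, (L s)ᴴ * L s = 1)
    {ρ σ : V → Matrix n n ℂ} (hρ : ∀ i, (ρ i).PosSemidef) (hσ : ∀ i, (σ i).PosSemidef)
    (hρs : Summable (fun i => (ρ i).trace.re)) (hρinv : oqrwMap S L ρ = ρ)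
    (hσinv : oqrwMap S L σ = σ) : IsKerInvariant S L (fun i => (ρ i - σ i)⁺) := by
  intro i s hs y hy
  set a := fun j => (ρ j - σ j)⁺
  have ha : ∀ j, (a j).PosSemidef := fun j => (CFC.posPart_nonneg _).posSemidef
  have hle : ∀ j, ρ j - σ j ≤ oqrwMap S L a j := by
    intro j
    have hsub : oqrwMap S L a j - (ρ j - σ j) = oqrwMap S L (fun k => (ρ k - σ k)⁻) j := by
      rw [← congrFun hρinv j, ← congrFun hσinv j, ← oqrwMap_sub, ← oqrwMap_sub]
      congr 1
      funext k
      have hk : IsSelfAdjoint (ρ k - σ k) := (hρ k).isHermitian.sub (hσ k).isHermitian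
      simp only [Pi.sub_apply, a]
      nth_rw 2 [← CFC.posPart_sub_negPart _ hk]
      abel
    exact le_iff.mpr (hsub ▸ posSemidef_oqrwMap (fun k => (CFC.negPart_nonneg _).posSemidef) j)
  have ha_sum : HasSum (fun j => (a j).trace.re) (∑' j, (a j).trace.re) :=
    (hρs.of_nonneg_of_le (fun j => (ha j).re_trace_nonneg)
      fun j => re_trace_posPart_le (hρ j) (sub_le_self _ (hσ j).nonneg)).hasSum
  have htr := eq_of_le_of_hasSum (fun j => re_trace_posPart_le (posSemidef_oqrwMap ha j) (hle j))
    ha_sum (hasSum_re_trace_oqrwMap hstoch ha ha_sum)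
  exact mulVec_conjTranspose_mulVec_eq_zero_of_oqrwMap ha hs
    (mulVec_eq_zero_of_re_trace_le_posPart (posSemidef_oqrwMap ha i) (hle i) (congrFun htr i).ge
      hy)

theorem eq_of_oqrwMap_eq (hstoch : ∑ s ∈ S, (L s)ᴴ * L s = 1) (hirr : IsPathIrreducible S L)
    {ρ σ : V → Matrix n n ℂ} (hρ : ∀ i, (ρ i).PosSemidef) (hσ : ∀ i, (σ i).PosSemidef) {t : ℝ}
    (hρs : HasSum (fun i => (ρ i).trace.re) t) (hσs : HasSum (fun i => (σ i).trace.re) t)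
    (hρinv : oqrwMap S L ρ = ρ) (hσinv : oqrwMap S L σ = σ) : ρ = σ := by
  have hη : ∀ i, IsSelfAdjoint (ρ i - σ i) := fun i => (hρ i).isHermitian.sub (hσ i).isHermitian
  rcases hirr.eq_zero_or_eq_zero (a := fun i => (ρ i - σ i)⁺) (b := fun i => (ρ i - σ i)⁻)
    (fun i => (CFC.posPart_nonneg _).posSemidef.isHermitian)
    (isKerInvariant_posPart_sub hstoch hρ hσ hρs.summable hρinv hσinv)
    (fun i => CFC.posPart_mul_negPart _) with h | h
  · exact eq_of_le_of_hasSum_re_trace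
      (fun i => sub_nonpos.mp ((CFC.posPart_eq_zero_iff _ (hη i)).mp (h i))) hρs hσs
  · exact (eq_of_le_of_hasSum_re_trace
      (fun i => sub_nonneg.mp ((CFC.negPart_eq_zero_iff _ (hη i)).mp (h i))) hσs hρs).symm

end OpenQuantumRandomWalk

theorem stmt16_general {V : Type*} [AddCommGroup V] [Infinite V] {k : ℕ}
    (S : Finset V) (L : V → Matrix (Fin k) (Fin k) ℂ)
    (hstoch : ∑ s ∈ S, (L s)ᴴ * L s = 1)
    (hirr : ∀ v : V, ∀ x y : Fin k → ℂ, x ≠ 0 → y ≠ 0 →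
      ∃ l : List V, l ≠ [] ∧ (∀ s ∈ l, s ∈ S) ∧ l.sum = v ∧
        star y ⬝ᵥ ((l.map L).prod).mulVec x ≠ 0) :
    ¬ ∃ ρ : V → Matrix (Fin k) (Fin k) ℂ,
        (∀ i, (ρ i).PosSemidef) ∧
        Summable (fun i => ((ρ i).trace).re) ∧
        (∑' i, ((ρ i).trace).re) = 1 ∧
        (∀ i, (∑ s ∈ S, L s * ρ (i + s) * (L s)ᴴ) = ρ i) := by
  rintro ⟨ρ, hρ, hsum, htot, hinv⟩
  have hpath : IsPathIrreducible S L := fun v x y hx hy => (hirr v x y hx hy).imp fun _ h => h.2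
  have hρs : HasSum (fun i => (ρ i).trace.re) 1 := htot ▸ hsum.hasSum
  have hρinv : oqrwMap S L ρ = ρ := funext hinv
  have hshift : ∀ u, (fun i => ρ (i + u)) = ρ := fun u =>
    eq_of_oqrwMap_eq hstoch hpath (fun i => hρ _) hρ
      ((Equiv.addRight u).hasSum_iff (f := fun i => (ρ i).trace.re) |>.mpr hρs) hρs
      (by rw [oqrwMap_comp_add_right, hρinv]) hρinv
  have hconst : (fun i => (ρ i).trace.re) = fun _ => (ρ 0).trace.re :=
    funext fun i => by simpa using congrArg (fun A => A.trace.re) (congrFun (hshift i) 0)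
  rw [hconst] at hsum htot
  rw [(summable_const_iff _).mp hsum, tsum_zero] at htot
  exact zero_ne_one htot

/-- An irreducible translation-invariant open quantum random walk on an
infinite countable abelian group has no invariant state. Here `L s` is the
transition operator `L_{i,j} = L_{j-i}` for `s = j - i`, supported on the
finite set `S`; invariant states (which are necessarily block-diagonal) are
represented by their diagonal blocks `ρ i`. Irreducibility is expressed by the
path criterion: for any displacement `v` and nonzero vectors `x, y` there is a
path with steps in `S`, total displacement `v`, and `⟨y, L_π x⟩ ≠ 0`. -/
theorem stmt16 {V : Type*} [AddCommGroup V] [Countable V] [Infinite V]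
    [DecidableEq V] {k : ℕ}
    (S : Finset V) (L : V → Matrix (Fin k) (Fin k) ℂ)
    (hL0 : ∀ s ∉ S, L s = 0)
    (hstoch : ∑ s ∈ S, (L s)ᴴ * L s = 1)
    (hirr : ∀ v : V, ∀ x y : Fin k → ℂ, x ≠ 0 → y ≠ 0 →
      ∃ l : List V, l ≠ [] ∧ (∀ s ∈ l, s ∈ S) ∧ l.sum = v ∧
        star y ⬝ᵥ ((l.map L).prod).mulVec x ≠ 0) :
    ¬ ∃ ρ : V → Matrix (Fin k) (Fin k) ℂ,
        (∀ i, (ρ i).PosSemidef) ∧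
        Summable (fun i => ((ρ i).trace).re) ∧
        (∑' i, ((ρ i).trace).re) = 1 ∧
        (∀ i, (∑ s ∈ S, L s * ρ (i + s) * (L s)ᴴ) = ρ i) :=
  stmt16_general S L hstoch hirr
end
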